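/- arXiv:1803.05594 — 4 statements merged into one kernel-verified Lean document; each statement's English description precedes it below -/
import Mathlib

section
/- For n ≥ 1, the number of standard Young tableaux of the skew shape Sh¹(R, n), where R is the single row {(1,1),(1,2),(1,3)} and Sh¹(R,n) = ⋃_{i=0}^{n} (i·(1,1) + R) (the union of n+1 translates of a row of three cells, each shifted one step down and one step right from the previous), equals 2ⁿ. -/
/-- A standard Young tableau of shape `S ⊆ ℤ²` (cells written `(row, column)`). -/
def IsSYT (S : Finset (ℤ × ℤ)) (τ : ℤ × ℤ → ℕ) : Prop :=
  Set.BijOn τ ↑S (Set.Icc 1 S.card) ∧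
  (∀ p : ℤ × ℤ, p ∈ S → (p.1, p.2 + 1) ∈ S → τ p < τ (p.1, p.2 + 1)) ∧
  (∀ p : ℤ × ℤ, p ∈ S → (p.1 + 1, p.2) ∈ S → τ p < τ (p.1 + 1, p.2))

/-- The set of standard Young tableaux of shape `S`, normalized to vanish off `S`. -/
def sytSet (S : Finset (ℤ × ℤ)) : Set ((ℤ × ℤ) → ℕ) :=
  {τ | IsSYT S τ ∧ ∀ v, v ∉ S → τ v = 0}

/-- `Sh¹(R, n) = ⋃_{i=0}^{n} (i·(1,1) + R)` for `R = {(1,1), …, (1,k)}` a single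
row of `k` cells: `n+1` rows of `k` cells, each shifted one down and one right. -/
def Sh1 (k n : ℕ) : Finset (ℤ × ℤ) :=
  (Finset.range (n + 1)).biUnion fun i =>
    (Finset.range k).image fun j : ℕ => ((1 + (i : ℤ), 1 + (j : ℤ) + (i : ℤ)) : ℤ × ℤ)

def cell (i d : ℕ) : ℤ × ℤ := (1 + (i : ℤ), 1 + (d : ℤ) + (i : ℤ))

lemma mem_Sh1 {k n : ℕ} {p : ℤ × ℤ} :
    p ∈ Sh1 k n ↔ ∃ i ≤ n, ∃ d < k, p = cell i d := by
  simp [Sh1, Finset.mem_biUnion, Finset.mem_image, Finset.mem_range, Nat.lt_succ_iff, cell,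
    eq_comm]


lemma cell_mem_Sh1 {k n i d : ℕ} (hi : i ≤ n) (hd : d < k) : cell i d ∈ Sh1 k n :=
  mem_Sh1.2 ⟨i, hi, d, hd, rfl⟩

lemma cell_inj {i d i' d' : ℕ} (h : cell i d = cell i' d') : i = i' ∧ d = d' := by
  simp only [cell, Prod.ext_iff] at h
  omega

lemma card_Sh1 (n : ℕ) : (Sh1 3 n).card = 3 * n + 3 := by
  rw [Sh1, Finset.card_biUnion]
  · have : ∀ i ∈ Finset.range (n+1),
        ((Finset.range 3).image fun j : ℕ => ((1 + (i : ℤ), 1 + (j : ℤ) + (i : ℤ)) : ℤ × ℤ)).card = 3 := by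
      intro i _
      rw [Finset.card_image_of_injOn, Finset.card_range]
      intro a _ b _ hab
      simp only [Prod.ext_iff] at hab
      omega
    rw [Finset.sum_congr rfl this]
    simp; ring
  · intro a _ b _ hab
    simp only [Finset.disjoint_left, Finset.mem_image, Finset.mem_range]
    rintro p ⟨j, hj, rfl⟩ ⟨j', hj', he⟩
    simp only [Prod.ext_iff] at he
    omega

def epsn (b : Bool) : ℕ := if b then 1 else 0

lemma epsn_le (b : Bool) : epsn b ≤ 1 := by cases b <;> simp [epsn]

def tabCell (n : ℕ) (ε : ℕ → Bool) (i d : ℕ) : ℕ :=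
  match d with
  | 0 => if i = 0 then 1 else 3 * i + epsn (ε (i - 1))
  | 1 => 3 * i + 2
  | _ => if i = n then 3 * n + 3 else 3 * i + 4 - epsn (ε i)

def tab (n : ℕ) (ε : ℕ → Bool) (p : ℤ × ℤ) : ℕ :=
  if p ∈ Sh1 3 n then tabCell n ε (p.1 - 1).toNat (p.2 - p.1).toNat else 0

lemma tab_cell {n i d : ℕ} (ε : ℕ → Bool) (hi : i ≤ n) (hd : d < 3) :
    tab n ε (cell i d) = tabCell n ε i d := by
  rw [tab, if_pos (cell_mem_Sh1 hi hd)]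
  have h1 : ((cell i d).1 - 1).toNat = i := by simp [cell]
  have h2 : ((cell i d).2 - (cell i d).1).toNat = d := by
    simp only [cell]; omega
  rw [h1, h2]

lemma tab_mapsTo {n : ℕ} (ε : ℕ → Bool) {i d : ℕ} (hi : i ≤ n) (hd : d < 3) :
    1 ≤ tabCell n ε i d ∧ tabCell n ε i d ≤ 3 * n + 3 := by
  have e1 := epsn_le (ε (i - 1)); have e2 := epsn_le (ε i)
  interval_cases d <;> simp only [tabCell] <;> first | omega | (split_ifs <;> omega)

lemma tabCell_surj {n : ℕ} (ε : ℕ → Bool) {v : ℕ} (h1 : 1 ≤ v) (h2 : v ≤ 3 * n + 3) :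
    ∃ i ≤ n, ∃ d < 3, tabCell n ε i d = v := by
  set q := (v - 1) / 3 with hq
  have hr : v = 3 * q + (v - 1) % 3 + 1 := by omega
  have hqn : q ≤ n := by omega
  have hrlt : (v - 1) % 3 < 3 := by omega
  interval_cases h : (v - 1) % 3
  · -- v = 3q+1
    by_cases hq0 : q = 0
    · exact ⟨0, by omega, 0, by omega, by simp [tabCell]; omega⟩
    · by_cases he : ε (q - 1)
      · exact ⟨q, hqn, 0, by omega, by simp [tabCell, hq0, he, epsn]; omega⟩
      · refine ⟨q - 1, by omega, 2, by omega, ?_⟩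
        have : q - 1 ≠ n := by omega
        simp [tabCell, this, he, epsn]; omega
  · exact ⟨q, hqn, 1, by omega, by simp [tabCell]; omega⟩
  · -- v = 3q+3
    by_cases hqn' : q = n
    · exact ⟨n, le_refl n, 2, by omega, by simp [tabCell]; omega⟩
    · by_cases he : ε q
      · exact ⟨q, hqn, 2, by omega, by simp [tabCell, hqn', he, epsn]; omega⟩
      · refine ⟨q + 1, by omega, 0, by omega, ?_⟩
        simp [tabCell, he, epsn]; omega

lemma tabCell_inj {n : ℕ} (ε : ℕ → Bool) {i d i' d' : ℕ} (hi : i ≤ n) (hd : d < 3)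
    (hi' : i' ≤ n) (hd' : d' < 3) (h : tabCell n ε i d = tabCell n ε i' d') :
    i = i' ∧ d = d' := by
  have e0 := epsn_le (ε (i - 1)); have e0' := epsn_le (ε (i' - 1))
  have e2 := epsn_le (ε i); have e2' := epsn_le (ε i')
  interval_cases d <;> interval_cases d' <;> simp only [tabCell] at h <;>
    first
      | omega
      | (split_ifs at h <;>
         first
          | omega
          | (rcases eq_or_ne i (i' + 1) with hii | hii
             · subst hii; simp only [Nat.add_sub_cancel] at h e0; omega
             · omega)
          | (rcases eq_or_ne i' (i + 1) with hii | hii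
             · subst hii; simp only [Nat.add_sub_cancel] at h e0'; omega
             · omega))

lemma tab_mem_sytSet (n : ℕ) (ε : ℕ → Bool) : tab n ε ∈ sytSet (Sh1 3 n) := by
  refine ⟨⟨⟨?_, ?_, ?_⟩, ?_, ?_⟩, fun v hv => if_neg hv⟩
  · -- MapsTo
    intro p hp
    rw [Finset.mem_coe, mem_Sh1] at hp
    obtain ⟨i, hi, d, hd, rfl⟩ := hp
    rw [tab_cell ε hi hd, card_Sh1]
    exact tab_mapsTo ε hi hd
  · -- InjOn
    intro p hp p' hp' h
    rw [Finset.mem_coe, mem_Sh1] at hp hp'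
    obtain ⟨i, hi, d, hd, rfl⟩ := hp
    obtain ⟨i', hi', d', hd', rfl⟩ := hp'
    rw [tab_cell ε hi hd, tab_cell ε hi' hd'] at h
    obtain ⟨h1, h2⟩ := tabCell_inj ε hi hd hi' hd' h
    rw [h1, h2]
  · -- SurjOn
    intro v hv
    rw [card_Sh1] at hv
    obtain ⟨i, hi, d, hd, hval⟩ := tabCell_surj ε hv.1 hv.2
    exact ⟨cell i d, Finset.mem_coe.2 (cell_mem_Sh1 hi hd), by rw [tab_cell ε hi hd, hval]⟩
  · -- rows
    intro p hp hp'
    rw [mem_Sh1] at hp hp'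
    obtain ⟨i, hi, d, hd, rfl⟩ := hp
    obtain ⟨i', hi', d', hd', he⟩ := hp'
    have hcell : ((cell i d).1, (cell i d).2 + 1) = cell i (d + 1) := by
      simp only [cell, Prod.ext_iff]; constructor <;> push_cast <;> ring
    have hii : i = i' ∧ d + 1 = d' := by
      rw [hcell] at he; have := cell_inj he.symm; omega
    obtain ⟨h1, h2⟩ := hii
    subst h1; subst h2
    rw [hcell, tab_cell ε hi hd, tab_cell ε hi hd']
    have e0 := epsn_le (ε (i - 1)); have e2 := epsn_le (ε i)
    interval_cases d <;> simp only [tabCell] <;>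
      first | omega | (split_ifs <;> omega)
  · -- columns
    intro p hp hp'
    rw [mem_Sh1] at hp hp'
    obtain ⟨i, hi, d, hd, rfl⟩ := hp
    obtain ⟨i', hi', d', hd', he⟩ := hp'
    have hdd : i + 1 = i' ∧ d = d' + 1 := by
      simp only [cell, Prod.ext_iff] at he; omega
    obtain ⟨h1, hd1⟩ := hdd
    subst h1
    have hcell : ((cell i d).1 + 1, (cell i d).2) = cell (i + 1) d' := by
      simp only [cell, Prod.ext_iff]; constructor <;> push_cast <;> omega
    rw [hcell, tab_cell ε hi hd, tab_cell ε hi' hd']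
    have e2 := epsn_le (ε i)
    have e0' := epsn_le (ε (i + 1 - 1))
    subst hd1
    interval_cases d' <;> simp only [tabCell] <;>
      first | omega | (split_ifs <;> simp only [Nat.add_sub_cancel] at * <;> omega)

lemma cell_right (i d : ℕ) : ((cell i d).1, (cell i d).2 + 1) = cell i (d + 1) := by
  simp only [cell, Prod.ext_iff]; constructor <;> push_cast <;> ring

lemma cell_down (i d : ℕ) : ((cell i (d + 1)).1 + 1, (cell i (d + 1)).2) = cell (i + 1) d := by
  simp only [cell, Prod.ext_iff]; constructor <;> push_cast <;> ring

section Conv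

variable {n : ℕ} {τ : ℤ × ℤ → ℕ}

lemma syt_row (h : τ ∈ sytSet (Sh1 3 n)) {i d : ℕ} (hi : i ≤ n) (hd : d + 1 < 3) :
    τ (cell i d) < τ (cell i (d + 1)) := by
  have := h.1.2.1 (cell i d) (cell_mem_Sh1 hi (by omega))
    (by rw [cell_right]; exact cell_mem_Sh1 hi hd)
  rwa [cell_right] at this

lemma syt_col (h : τ ∈ sytSet (Sh1 3 n)) {i d : ℕ} (hi : i + 1 ≤ n) (hd : d < 2) :
    τ (cell i (d + 1)) < τ (cell (i + 1) d) := by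
  have := h.1.2.2 (cell i (d + 1)) (cell_mem_Sh1 (by omega) (by omega))
    (by rw [cell_down]; exact cell_mem_Sh1 hi (by omega))
  rwa [cell_down] at this

lemma syt_b_step (h : τ ∈ sytSet (Sh1 3 n)) {i : ℕ} (hi : i + 1 ≤ n) :
    τ (cell i 1) < τ (cell (i + 1) 1) :=
  lt_trans (syt_col h hi (by omega)) (syt_row h hi (by omega))

lemma syt_b_mono (h : τ ∈ sytSet (Sh1 3 n)) {j i : ℕ} (hj : j ≤ i) (hi : i ≤ n) :
    τ (cell j 1) ≤ τ (cell i 1) := by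
  induction i with
  | zero =>
    have : j = 0 := by omega
    subst this; rfl
  | succ m ih =>
    rcases Nat.lt_or_ge j (m + 1) with hlt | hge
    · exact le_trans (ih (by omega) (by omega)) (le_of_lt (syt_b_step h hi))
    · have : j = m + 1 := by omega
      subst this; rfl

lemma syt_pos (h : τ ∈ sytSet (Sh1 3 n)) {i d : ℕ} (hi : i ≤ n) (hd : d < 3) :
    1 ≤ τ (cell i d) ∧ τ (cell i d) ≤ 3 * n + 3 := by
  have := h.1.1.1 (Finset.mem_coe.2 (cell_mem_Sh1 hi hd))
  rw [card_Sh1] at this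
  exact this

def Lset (i : ℕ) : Finset (ℤ × ℤ) :=
  ((Finset.range (i + 1)).image fun j => cell j 0) ∪
    ((Finset.range i).image fun j => cell j 1) ∪ ((Finset.range i).image fun j => cell j 2)

def Uset (i n : ℕ) : Finset (ℤ × ℤ) :=
  ((Finset.Ioc i n).image fun j => cell j 0) ∪
    ((Finset.Ioc i n).image fun j => cell j 1) ∪ ((Finset.Icc i n).image fun j => cell j 2)

lemma cell_injective (d : ℕ) : Function.Injective fun j => cell j d :=
  fun _ _ hab => (cell_inj hab).1

lemma disj_img {s t : Finset ℕ} {d d' : ℕ} (h : d ≠ d') :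
    Disjoint (s.image fun j => cell j d) (t.image fun j => cell j d') := by
  simp only [Finset.disjoint_left, Finset.mem_image]
  rintro p ⟨j, _, rfl⟩ ⟨j', _, he⟩
  exact h ((cell_inj he.symm).2)

lemma card_Lset (i : ℕ) : (Lset i).card = 3 * i + 1 := by
  rw [Lset, Finset.card_union_of_disjoint, Finset.card_union_of_disjoint,
    Finset.card_image_of_injective _ (cell_injective 0),
    Finset.card_image_of_injective _ (cell_injective 1),
    Finset.card_image_of_injective _ (cell_injective 2), Finset.card_range, Finset.card_range]
  · omega
  · exact disj_img (by omega)
  · exact Finset.disjoint_union_left.2 ⟨disj_img (by omega), disj_img (by omega)⟩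

lemma card_Uset {i n : ℕ} (hi : i ≤ n) : (Uset i n).card = 3 * (n - i) + 1 := by
  rw [Uset, Finset.card_union_of_disjoint, Finset.card_union_of_disjoint,
    Finset.card_image_of_injective _ (cell_injective 0),
    Finset.card_image_of_injective _ (cell_injective 1),
    Finset.card_image_of_injective _ (cell_injective 2), Nat.card_Ioc, Nat.card_Icc]
  · omega
  · exact disj_img (by omega)
  · exact Finset.disjoint_union_left.2 ⟨disj_img (by omega), disj_img (by omega)⟩

lemma syt_b_val (h : τ ∈ sytSet (Sh1 3 n)) {i : ℕ} (hi : i ≤ n) :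
    τ (cell i 1) = 3 * i + 2 := by
  have hinj : Set.InjOn τ ↑(Sh1 3 n) := h.1.1.2.1
  -- lower bound
  have hlow : 3 * i + 1 ≤ τ (cell i 1) - 1 := by
    have hsub : ∀ p ∈ Lset i, p ∈ Sh1 3 n := by
      intro p hp
      simp only [Lset, Finset.mem_union, Finset.mem_image, Finset.mem_range] at hp
      rcases hp with (⟨j, hj, rfl⟩ | ⟨j, hj, rfl⟩) | ⟨j, hj, rfl⟩ <;>
        exact cell_mem_Sh1 (by omega) (by omega)
    have hmaps : ∀ p ∈ Lset i, τ p ∈ Finset.Icc 1 (τ (cell i 1) - 1) := by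
      intro p hp
      have hpos := (syt_pos h (n := n) (i := i) (d := 1) hi (by omega)).1
      have hp1 : 1 ≤ τ p := by
        have := h.1.1.1 (Finset.mem_coe.2 (hsub p hp)); exact this.1
      simp only [Lset, Finset.mem_union, Finset.mem_image, Finset.mem_range] at hp
      rw [Finset.mem_Icc]
      rcases hp with (⟨j, hj, rfl⟩ | ⟨j, hj, rfl⟩) | ⟨j, hj, rfl⟩
      · have h1 : τ (cell j 0) < τ (cell j 1) := syt_row h (by omega) (by omega)
        have h2 : τ (cell j 1) ≤ τ (cell i 1) := syt_b_mono h (by omega) hi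
        omega
      · have h2 : τ (cell j 1) < τ (cell i 1) :=
          lt_of_lt_of_le (syt_b_step h (by omega)) (syt_b_mono h (by omega) hi)
        omega
      · have h1 : τ (cell j 2) < τ (cell (j + 1) 1) := syt_col h (by omega) (by omega)
        have h2 : τ (cell (j + 1) 1) ≤ τ (cell i 1) := syt_b_mono h (by omega) hi
        omega
    have := Finset.card_le_card_of_injOn τ hmaps
      (fun p hp p' hp' hpp => hinj (hsub p hp) (hsub p' hp') hpp)
    rwa [card_Lset, Nat.card_Icc] at this
  -- upper bound
  have hup : 3 * (n - i) + 1 ≤ 3 * n + 3 - τ (cell i 1) := by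
    have hsub : ∀ p ∈ Uset i n, p ∈ Sh1 3 n := by
      intro p hp
      simp only [Uset, Finset.mem_union, Finset.mem_image, Finset.mem_Ioc, Finset.mem_Icc] at hp
      rcases hp with (⟨j, hj, rfl⟩ | ⟨j, hj, rfl⟩) | ⟨j, hj, rfl⟩ <;>
        exact cell_mem_Sh1 (by omega) (by omega)
    have hmaps : ∀ p ∈ Uset i n, τ p ∈ Finset.Icc (τ (cell i 1) + 1) (3 * n + 3) := by
      intro p hp
      have hp2 : τ p ≤ 3 * n + 3 := by
        have := h.1.1.1 (Finset.mem_coe.2 (hsub p hp)); rw [card_Sh1] at this; exact this.2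
      simp only [Uset, Finset.mem_union, Finset.mem_image, Finset.mem_Ioc, Finset.mem_Icc] at hp
      rw [Finset.mem_Icc]
      rcases hp with (⟨j, hj, rfl⟩ | ⟨j, hj, rfl⟩) | ⟨j, hj, rfl⟩
      · have h1 : τ (cell i 1) ≤ τ (cell (j - 1) 1) := syt_b_mono h (by omega) (by omega)
        have h2 : τ (cell (j - 1) 1) < τ (cell (j - 1 + 1) 0) := syt_col h (by omega) (by omega)
        have h3 : j - 1 + 1 = j := by omega
        rw [h3] at h2; omega
      · have h2 : τ (cell i 1) < τ (cell j 1) :=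
          lt_of_le_of_lt (syt_b_mono h (j := i) (i := j - 1) (by omega) (by omega))
            (by have := syt_b_step h (i := j - 1) (by omega)
                have h3 : j - 1 + 1 = j := by omega
                rwa [h3] at this)
        omega
      · have h1 : τ (cell i 1) ≤ τ (cell j 1) := syt_b_mono h (by omega) (by omega)
        have h2 : τ (cell j 1) < τ (cell j 2) := syt_row h (by omega) (by omega)
        omega
    have := Finset.card_le_card_of_injOn τ hmaps
      (fun p hp p' hp' hpp => hinj (hsub p hp) (hsub p' hp') hpp)
    rw [card_Uset hi, Nat.card_Icc] at this; omega
  have hpos := syt_pos h (n := n) (i := i) (d := 1) hi (by omega)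
  omega

end Conv

lemma syt_pair {n : ℕ} {τ : ℤ × ℤ → ℕ} (h : τ ∈ sytSet (Sh1 3 n)) {i : ℕ} (hi : i + 1 ≤ n) :
    (τ (cell i 2) = 3 * i + 3 ∧ τ (cell (i + 1) 0) = 3 * i + 4) ∨
      (τ (cell i 2) = 3 * i + 4 ∧ τ (cell (i + 1) 0) = 3 * i + 3) := by
  have hb1 : τ (cell i 1) = 3 * i + 2 := syt_b_val h (by omega)
  have hb2 : τ (cell (i + 1) 1) = 3 * (i + 1) + 2 := syt_b_val h hi
  have hc1 : τ (cell i 1) < τ (cell i 2) := syt_row h (by omega) (by omega)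
  have hc2 : τ (cell i 2) < τ (cell (i + 1) 1) := syt_col h hi (by omega)
  have ha1 : τ (cell i 1) < τ (cell (i + 1) 0) := syt_col h hi (by omega)
  have ha2 : τ (cell (i + 1) 0) < τ (cell (i + 1) 1) := syt_row h hi (by omega)
  have hne : τ (cell i 2) ≠ τ (cell (i + 1) 0) := by
    intro he
    have := h.1.1.2.1
      (show (cell i 2 : ℤ × ℤ) ∈ ↑(Sh1 3 n) from Finset.mem_coe.2 (cell_mem_Sh1 (by omega) (by omega)))
      (show (cell (i + 1) 0 : ℤ × ℤ) ∈ ↑(Sh1 3 n) from Finset.mem_coe.2 (cell_mem_Sh1 hi (by omega))) he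
    have := cell_inj this
    omega
  omega

lemma syt_eq_tab {n : ℕ} {τ : ℤ × ℤ → ℕ} (h : τ ∈ sytSet (Sh1 3 n)) :
    τ = tab n fun i => if i < n then decide (τ (cell i 2) = 3 * i + 3) else false := by
  set ε : ℕ → Bool := fun i => if i < n then decide (τ (cell i 2) = 3 * i + 3) else false with hε
  funext p
  by_cases hp : p ∈ Sh1 3 n
  · rw [mem_Sh1] at hp
    obtain ⟨i, hi, d, hd, rfl⟩ := hp
    rw [tab_cell ε hi hd]
    interval_cases d
    · -- d = 0
      by_cases hi0 : i = 0
      · subst hi0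
        have ht : tabCell n ε 0 0 = 1 := rfl
        rw [ht]
        have h1 := (syt_pos h (n := n) (i := 0) (d := 0) (by omega) (by omega)).1
        have h2 : τ (cell 0 0) < τ (cell 0 1) := syt_row h (by omega) (by omega)
        have h3 : τ (cell 0 1) = 2 := syt_b_val h (by omega)
        omega
      · simp only [tabCell, if_neg hi0]
        have hlt : i - 1 < n := by omega
        have hstep : i - 1 + 1 = i := by omega
        have hpair := syt_pair h (i := i - 1) (by omega)
        rw [hstep] at hpair
        rcases hpair with ⟨hc, ha⟩ | ⟨hc, ha⟩
        · rw [ha, hε]; simp only [if_pos hlt, hc, decide_eq_true_eq, epsn]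
          simp <;> omega
        · rw [ha, hε]
          have : ¬ (τ (cell (i-1) 2) = 3 * (i - 1) + 3) := by omega
          simp only [if_pos hlt, epsn, decide_eq_false this]
          simp <;> omega
    · simp only [tabCell]; exact syt_b_val h hi
    · -- d = 2
      by_cases hin : i = n
      · simp only [tabCell, if_pos hin]
        have h1 := (syt_pos h (n := n) (i := i) (d := 2) hi (by omega)).2
        have h2 : τ (cell i 1) < τ (cell i 2) := syt_row h hi (by omega)
        have h3 : τ (cell i 1) = 3 * i + 2 := syt_b_val h hi
        omega
      · simp only [tabCell, if_neg hin]
        have hlt : i < n := by omega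
        rcases syt_pair h (i := i) (by omega) with ⟨hc, _⟩ | ⟨hc, _⟩
        · rw [hc, hε]; simp only [if_pos hlt, hc, decide_eq_true_eq, epsn]
          simp <;> omega
        · rw [hc, hε]
          have : ¬ (τ (cell i 2) = 3 * i + 3) := by omega
          simp only [if_pos hlt, epsn, decide_eq_false this]
          simp
  · rw [tab, if_neg hp, h.2 p hp]


/-- The number of standard Young tableaux of shape `Sh¹({(1,1),(1,2),(1,3)}, n)`
is `2ⁿ` for `n ≥ 1`. -/
theorem card_syt_three_cell_rows (n : ℕ) (hn : 1 ≤ n) :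
    (sytSet (Sh1 3 n)).ncard = 2 ^ n := by
  classical
  set E : Set (ℕ → Bool) := {ε | ∀ i, n ≤ i → ε i = false} with hE
  have hset : sytSet (Sh1 3 n) = tab n '' E := by
    ext τ
    constructor
    · intro h
      refine ⟨fun i => if i < n then decide (τ (cell i 2) = 3 * i + 3) else false,
        fun i hi => by simp [Nat.not_lt.2 hi], (syt_eq_tab h).symm⟩
    · rintro ⟨ε, -, rfl⟩
      exact tab_mem_sytSet n ε
  have hinjE : Set.InjOn (tab n) E := by
    intro ε hε ε' hε' heq
    funext i
    by_cases hi : i < n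
    · have h1 := congrFun heq (cell i 2)
      rw [tab_cell ε (by omega) (by omega), tab_cell ε' (by omega) (by omega)] at h1
      simp only [tabCell, if_neg (show i ≠ n by omega)] at h1
      cases h2 : ε i <;> cases h3 : ε' i <;> simp [h2, h3, epsn] at h1 ⊢ <;> omega
    · rw [hε i (by omega), hε' i (by omega)]
  have hF : E = Set.range fun g : Fin n → Bool => fun i => if h : i < n then g ⟨i, h⟩ else false := by
    ext ε
    constructor
    · intro hε
      refine ⟨fun j => ε j, ?_⟩
      funext i
      by_cases h' : i < n
      · simp [h']
      · simp [h', hε i (by omega)]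
    · rintro ⟨g, rfl⟩
      intro i hi
      simp [Nat.not_lt.2 hi]
  have hFinj : Function.Injective
      fun g : Fin n → Bool => (fun i => if h : i < n then g ⟨i, h⟩ else false : ℕ → Bool) := by
    intro g g' hg
    funext j
    have := congrFun hg j.val
    simpa [j.isLt] using this
  rw [hset, Set.ncard_image_of_injOn hinjE, hF, ← Set.image_univ,
    Set.ncard_image_of_injective _ hFinj, Set.ncard_univ, Nat.card_eq_fintype_card]
  simp
end

section
/- Let T(n) denote the number of standard Young tableaux of the skew shape consisting of n rows of 4 cells each, where row i+1 is shifted one row down and one column right relative to row i (so consecutive rows overlap in 3 columns). Then for all n ≥ 3, T(n) = 6·T(n−1) − T(n−2). -/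
/-- `Sh¹(R, m) = ⋃_{i=0}^{m} (i·(1,1) + R)` with `R = {(1,1),(1,2),(1,3),(1,4)}`:
`m+1` rows of four cells, each row shifted one down and one right from the
previous (consecutive rows overlap in three columns). -/
def Sh1Four (m : ℕ) : Finset (ℤ × ℤ) :=
  (Finset.range (m + 1)).biUnion fun i =>
    (Finset.range 4).image fun j : ℕ => ((1 + (i : ℤ), 1 + (j : ℤ) + (i : ℤ)) : ℤ × ℤ)

/-- `T(n)`: the number of standard Young tableaux of the shape consisting of
`n` such rows of four cells, i.e. of shape `Sh¹(R, n-1)`. -/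
noncomputable def T (n : ℕ) : ℕ := (sytSet (Sh1Four (n - 1))).ncard

lemma sytSet_finite (S : Finset (ℤ × ℤ)) : (sytSet S).Finite := by
  have h : sytSet S ⊆ (fun g : ↥S → ℕ => fun v => if h : v ∈ S then g ⟨v, h⟩ else 0) ''
      Set.univ.pi (fun _ : ↥S => Set.Icc 0 S.card) := by
    intro τ hτ
    refine ⟨fun x => τ x, fun x _ => ?_, ?_⟩
    · have := hτ.1.1.1 (Finset.mem_coe.mpr x.2)
      exact ⟨Nat.zero_le _, this.2⟩
    · funext v
      by_cases hv : v ∈ S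
      · simp [hv]
      · simp [hv, hτ.2 v hv]
  exact Set.Finite.subset (Set.Finite.image _ (Set.Finite.pi fun _ => Set.finite_Icc _ _)) h

lemma exists_max_cell {S : Finset (ℤ × ℤ)} {τ} (hτ : τ ∈ sytSet S) (hS : S.Nonempty) :
    ∃ p ∈ S, τ p = S.card ∧ (p.1, p.2 + 1) ∉ S ∧ (p.1 + 1, p.2) ∉ S := by
  have hN : 1 ≤ S.card := hS.card_pos
  obtain ⟨p, hpS, hp⟩ := hτ.1.1.2.2 (Set.mem_Icc.mpr ⟨hN, le_rfl⟩)
  have hpS' : p ∈ S := Finset.mem_coe.mp hpS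
  refine ⟨p, hpS', hp, ?_, ?_⟩
  · intro h
    have h1 := hτ.1.2.1 p hpS' h
    have h2 := hτ.1.1.1 (Finset.mem_coe.mpr h)
    rw [Set.mem_Icc] at h2
    omega
  · intro h
    have h1 := hτ.1.2.2 p hpS' h
    have h2 := hτ.1.1.1 (Finset.mem_coe.mpr h)
    rw [Set.mem_Icc] at h2
    omega

lemma ncard_top_cell (S : Finset (ℤ × ℤ)) (p : ℤ × ℤ) (hp : p ∈ S)
    (hr : (p.1, p.2 + 1) ∉ S) (hd : (p.1 + 1, p.2) ∉ S) :
    {τ | τ ∈ sytSet S ∧ τ p = S.card}.ncard = (sytSet (S.erase p)).ncard := by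
  have hN : 1 ≤ S.card := Finset.card_pos.mpr ⟨p, hp⟩
  have hcard : (S.erase p).card = S.card - 1 := Finset.card_erase_of_mem hp
  have hbij : Set.BijOn (fun τ => Function.update τ p 0)
      {τ | τ ∈ sytSet S ∧ τ p = S.card} (sytSet (S.erase p)) := by
    refine ⟨?_, ?_, ?_⟩
    · -- MapsTo
      rintro τ ⟨⟨⟨⟨hmap, hinj, hsurj⟩, hrow, hcol⟩, hvan⟩, hmax⟩
      beta_reduce
      have hupd : ∀ x : ℤ × ℤ, x ≠ p → Function.update τ p 0 x = τ x := by
        intro x hx; exact Function.update_of_ne hx _ _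
      refine ⟨⟨⟨?_, ?_, ?_⟩, ?_, ?_⟩, ?_⟩
      · -- MapsTo
        intro x hx
        rw [Finset.mem_coe, Finset.mem_erase] at hx
        rw [hupd x hx.1, hcard]
        have h1 := hmap (Finset.mem_coe.mpr hx.2)
        rw [Set.mem_Icc] at h1 ⊢
        have : τ x ≠ S.card := by
          intro h
          exact hx.1 (hinj (Finset.mem_coe.mpr hx.2) (Finset.mem_coe.mpr hp) (by rw [h, hmax]))
        omega
      · -- InjOn
        intro x hx y hy hxy
        beta_reduce at hxy
        rw [Finset.mem_coe, Finset.mem_erase] at hx hy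
        rw [hupd x hx.1, hupd y hy.1] at hxy
        exact hinj (Finset.mem_coe.mpr hx.2) (Finset.mem_coe.mpr hy.2) hxy
      · -- SurjOn
        intro k hk
        rw [Set.mem_Icc, hcard] at hk
        obtain ⟨x, hxS, hx⟩ := hsurj (Set.mem_Icc.mpr ⟨hk.1, by omega⟩)
        have hxS' : x ∈ S := Finset.mem_coe.mp hxS
        have hxp : x ≠ p := by
          intro h; rw [h, hmax] at hx; omega
        exact ⟨x, Finset.mem_coe.mpr (Finset.mem_erase.mpr ⟨hxp, hxS'⟩), by beta_reduce; rw [hupd x hxp, hx]⟩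
      · -- rows
        intro q hq hq'
        beta_reduce
        rw [Finset.mem_erase] at hq hq'
        rw [hupd q hq.1, hupd _ hq'.1]
        exact hrow q hq.2 hq'.2
      · -- cols
        intro q hq hq'
        beta_reduce
        rw [Finset.mem_erase] at hq hq'
        rw [hupd q hq.1, hupd _ hq'.1]
        exact hcol q hq.2 hq'.2
      · -- vanish
        intro v hv
        beta_reduce
        by_cases hvp : v = p
        · rw [hvp]; exact Function.update_self _ _ _
        · rw [hupd v hvp]
          exact hvan v (fun hvS => hv (Finset.mem_erase.mpr ⟨hvp, hvS⟩))
    · -- InjOn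
      rintro τ₁ ⟨h₁, hm₁⟩ τ₂ ⟨h₂, hm₂⟩ heq
      funext v
      by_cases hvp : v = p
      · rw [hvp, hm₁, hm₂]
      · have := congrFun heq v
        beta_reduce at this
        rwa [Function.update_of_ne hvp, Function.update_of_ne hvp] at this
    · -- SurjOn
      rintro σ ⟨⟨⟨hmap, hinj, hsurj⟩, hrow, hcol⟩, hvan⟩
      have hpE : p ∉ S.erase p := Finset.notMem_erase _ _
      have hσp : σ p = 0 := hvan p hpE
      refine ⟨Function.update σ p S.card, ⟨⟨⟨⟨?_, ?_, ?_⟩, ?_, ?_⟩, ?_⟩, Function.update_self _ _ _⟩, ?_⟩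
      · -- MapsTo
        intro x hx
        have hxS : x ∈ S := Finset.mem_coe.mp hx
        by_cases hxp : x = p
        · rw [hxp, Function.update_self]; exact Set.mem_Icc.mpr ⟨hN, le_rfl⟩
        · rw [Function.update_of_ne hxp]
          have := hmap (Finset.mem_coe.mpr (Finset.mem_erase.mpr ⟨hxp, hxS⟩))
          rw [Set.mem_Icc, hcard] at this
          exact Set.mem_Icc.mpr ⟨this.1, by omega⟩
      · -- InjOn
        intro x hx y hy hxy
        have hxS : x ∈ S := Finset.mem_coe.mp hx
        have hyS : y ∈ S := Finset.mem_coe.mp hy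
        by_cases hxp : x = p <;> by_cases hyp : y = p
        · rw [hxp, hyp]
        · exfalso
          rw [hxp, Function.update_self, Function.update_of_ne hyp] at hxy
          have := hmap (Finset.mem_coe.mpr (Finset.mem_erase.mpr ⟨hyp, hyS⟩))
          rw [Set.mem_Icc, hcard] at this
          omega
        · exfalso
          rw [hyp, Function.update_self, Function.update_of_ne hxp] at hxy
          have := hmap (Finset.mem_coe.mpr (Finset.mem_erase.mpr ⟨hxp, hxS⟩))
          rw [Set.mem_Icc, hcard] at this
          omega
        · rw [Function.update_of_ne hxp, Function.update_of_ne hyp] at hxy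
          exact hinj (Finset.mem_coe.mpr (Finset.mem_erase.mpr ⟨hxp, hxS⟩))
            (Finset.mem_coe.mpr (Finset.mem_erase.mpr ⟨hyp, hyS⟩)) hxy
      · -- SurjOn
        intro k hk
        rw [Set.mem_Icc] at hk
        by_cases hkN : k = S.card
        · exact ⟨p, Finset.mem_coe.mpr hp, by rw [Function.update_self, hkN]⟩
        · have hk' : 1 ≤ k ∧ k ≤ (S.erase p).card := by rw [hcard]; omega
          obtain ⟨x, hxE, hx⟩ := hsurj (Set.mem_Icc.mpr hk')
          have hxE' : x ∈ S.erase p := Finset.mem_coe.mp hxE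
          have hxp : x ≠ p := (Finset.mem_erase.mp hxE').1
          exact ⟨x, Finset.mem_coe.mpr (Finset.mem_erase.mp hxE').2,
            by rw [Function.update_of_ne hxp, hx]⟩
      · -- rows
        intro q hq hq'
        by_cases hqp : q = p
        · exact absurd (hqp ▸ hq') hr
        · rw [Function.update_of_ne hqp]
          by_cases hq'p : (q.1, q.2 + 1) = p
          · rw [hq'p, Function.update_self]
            have := hmap (Finset.mem_coe.mpr (Finset.mem_erase.mpr ⟨hqp, hq⟩))
            rw [Set.mem_Icc, hcard] at this
            omega
          · rw [Function.update_of_ne hq'p]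
            exact hrow q (Finset.mem_erase.mpr ⟨hqp, hq⟩) (Finset.mem_erase.mpr ⟨hq'p, hq'⟩)
      · -- cols
        intro q hq hq'
        by_cases hqp : q = p
        · exact absurd (hqp ▸ hq') hd
        · rw [Function.update_of_ne hqp]
          by_cases hq'p : (q.1 + 1, q.2) = p
          · rw [hq'p, Function.update_self]
            have := hmap (Finset.mem_coe.mpr (Finset.mem_erase.mpr ⟨hqp, hq⟩))
            rw [Set.mem_Icc, hcard] at this
            omega
          · rw [Function.update_of_ne hq'p]
            exact hcol q (Finset.mem_erase.mpr ⟨hqp, hq⟩) (Finset.mem_erase.mpr ⟨hq'p, hq'⟩)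
      · -- vanish
        intro v hv
        have hvp : v ≠ p := fun h => hv (h ▸ hp)
        rw [Function.update_of_ne hvp]
        exact hvan v (fun hvE => hv (Finset.mem_erase.mp hvE).2)
      · -- update τ p 0 = σ
        funext v
        beta_reduce
        by_cases hvp : v = p
        · rw [hvp, Function.update_self, hσp]
        · rw [Function.update_of_ne hvp, Function.update_of_ne hvp]
  rw [← hbij.image_eq, Set.ncard_image_of_injOn hbij.injOn]

lemma ncard_one (S : Finset (ℤ × ℤ)) (p : ℤ × ℤ) (hp : p ∈ S)
    (hr : (p.1, p.2 + 1) ∉ S) (hd : (p.1 + 1, p.2) ∉ S)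
    (huniq : ∀ q ∈ S, (q.1, q.2 + 1) ∉ S → (q.1 + 1, q.2) ∉ S → q = p) :
    (sytSet S).ncard = (sytSet (S.erase p)).ncard := by
  rw [← ncard_top_cell S p hp hr hd]
  congr 1
  ext τ
  simp only [Set.mem_setOf_eq]
  constructor
  · intro h
    obtain ⟨q, hqS, hq, hqr, hqd⟩ := exists_max_cell h ⟨p, hp⟩
    exact ⟨h, (huniq q hqS hqr hqd) ▸ hq⟩
  · exact fun h => h.1

lemma ncard_two (S : Finset (ℤ × ℤ)) (p q : ℤ × ℤ) (hp : p ∈ S)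
    (hrp : (p.1, p.2 + 1) ∉ S) (hdp : (p.1 + 1, p.2) ∉ S) (hq : q ∈ S)
    (hrq : (q.1, q.2 + 1) ∉ S) (hdq : (q.1 + 1, q.2) ∉ S) (hpq : p ≠ q)
    (huniq : ∀ r ∈ S, (r.1, r.2 + 1) ∉ S → (r.1 + 1, r.2) ∉ S → r = p ∨ r = q) :
    (sytSet S).ncard = (sytSet (S.erase p)).ncard + (sytSet (S.erase q)).ncard := by
  have hsplit : sytSet S = {τ | τ ∈ sytSet S ∧ τ p = S.card} ∪ {τ | τ ∈ sytSet S ∧ τ q = S.card} := by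
    ext τ
    simp only [Set.mem_union, Set.mem_setOf_eq]
    constructor
    · intro h
      obtain ⟨r, hrS, hrv, hrr, hrd⟩ := exists_max_cell h ⟨p, hp⟩
      rcases huniq r hrS hrr hrd with h' | h'
      · exact Or.inl ⟨h, h' ▸ hrv⟩
      · exact Or.inr ⟨h, h' ▸ hrv⟩
    · rintro (h | h) <;> exact h.1
  have hdisj : Disjoint {τ | τ ∈ sytSet S ∧ τ p = S.card} {τ | τ ∈ sytSet S ∧ τ q = S.card} := by
    rw [Set.disjoint_left]
    rintro τ ⟨hτ, hvp⟩ ⟨_, hvq⟩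
    exact hpq (hτ.1.1.2.1 (Finset.mem_coe.mpr hp) (Finset.mem_coe.mpr hq) (by rw [hvp, hvq]))
  have hfin := sytSet_finite S
  have key : (sytSet S).ncard = {τ | τ ∈ sytSet S ∧ τ p = S.card}.ncard
      + {τ | τ ∈ sytSet S ∧ τ q = S.card}.ncard := by
    conv_lhs => rw [hsplit]
    exact Set.ncard_union_eq hdisj
      (hfin.subset (fun τ h => h.1)) (hfin.subset (fun τ h => h.1))
  rw [key, ncard_top_cell S p hp hrp hdp, ncard_top_cell S q hq hrq hdq]

def rowF (i k : ℕ) : Finset (ℤ × ℤ) :=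
  (Finset.range k).image fun j : ℕ => ((1 + (i : ℤ), 1 + (j : ℤ) + (i : ℤ)) : ℤ × ℤ)

def shape (m a b c : ℕ) : Finset (ℤ × ℤ) :=
  (((Finset.range m).biUnion fun i => rowF i 4) ∪ rowF m a) ∪ (rowF (m+1) b ∪ rowF (m+2) c)

lemma mem_rowF {i k : ℕ} {p : ℤ × ℤ} :
    p ∈ rowF i k ↔ p.1 = 1 + (i : ℤ) ∧ p.1 ≤ p.2 ∧ p.2 < p.1 + k := by
  simp only [rowF, Finset.mem_image, Finset.mem_range]
  constructor
  · rintro ⟨j, hj, rfl⟩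
    dsimp only
    omega
  · rintro ⟨h1, h2, h3⟩
    refine ⟨(p.2 - p.1).toNat, by omega, ?_⟩
    rw [← Prod.mk.eta (p := p), Prod.mk.injEq]
    omega

lemma mem_shape {m a b c : ℕ} {p : ℤ × ℤ} :
    p ∈ shape m a b c ↔ p.1 ≤ p.2 ∧
      ((1 ≤ p.1 ∧ p.1 ≤ (m : ℤ) ∧ p.2 < p.1 + 4) ∨
       (p.1 = (m : ℤ) + 1 ∧ p.2 < p.1 + a) ∨
       (p.1 = (m : ℤ) + 2 ∧ p.2 < p.1 + b) ∨
       (p.1 = (m : ℤ) + 3 ∧ p.2 < p.1 + c)) := by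
  simp only [shape, Finset.mem_union, Finset.mem_biUnion, Finset.mem_range, mem_rowF]
  push_cast
  constructor
  · rintro ((⟨i, hi, h1, h2, h3⟩ | ⟨h1, h2, h3⟩) | (⟨h1, h2, h3⟩ | ⟨h1, h2, h3⟩)) <;> omega
  · rintro ⟨hle, (⟨h1, h2, h3⟩ | h | h | h)⟩
    · exact Or.inl (Or.inl ⟨(p.1 - 1).toNat, by omega, by omega, hle, by omega⟩)
    · exact Or.inl (Or.inr ⟨by omega, hle, by omega⟩)
    · exact Or.inr (Or.inl ⟨by omega, hle, by omega⟩)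
    · exact Or.inr (Or.inr ⟨by omega, hle, by omega⟩)

noncomputable def cnt (m a b c : ℕ) : ℕ := (sytSet (shape m a b c)).ncard

lemma removable_char {m a b c : ℕ} {q : ℤ × ℤ} (hq : q ∈ shape m a b c)
    (h1 : (q.1, q.2 + 1) ∉ shape m a b c) (h2 : (q.1 + 1, q.2) ∉ shape m a b c) :
    ((q.1 = (m : ℤ) ∧ q.2 = (m : ℤ) + 3) ∧ 1 ≤ m ∧ a ≤ 2) ∨
    ((q.1 = (m : ℤ) + 1 ∧ q.2 = (m : ℤ) + a) ∧ 1 ≤ a ∧ (a = 1 ∨ b + 2 ≤ a)) ∨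
    ((q.1 = (m : ℤ) + 2 ∧ q.2 = (m : ℤ) + 1 + b) ∧ 1 ≤ b ∧ (b = 1 ∨ c + 2 ≤ b)) ∨
    ((q.1 = (m : ℤ) + 3 ∧ q.2 = (m : ℤ) + 2 + c) ∧ 1 ≤ c) := by
  rw [mem_shape] at hq h1 h2
  dsimp only at h1 h2
  obtain ⟨hle, hrow⟩ := hq
  rcases hrow with h | h | h | h
  · have e1 : q.2 = q.1 + 3 := by by_contra hc; exact h1 (by omega)
    have e2 : q.1 = (m : ℤ) := by by_contra hc; exact h2 (by omega)
    have e3 : a ≤ 2 := by by_contra hc; exact h2 (by omega)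
    exact Or.inl ⟨⟨e2, by omega⟩, by omega, e3⟩
  · have e1 : q.2 = (m : ℤ) + a := by by_contra hc; exact h1 (by omega)
    have e3 : a = 1 ∨ b + 2 ≤ a := by
      by_contra hc
      push_neg at hc
      exact h2 (by omega)
    exact Or.inr (Or.inl ⟨⟨h.1, e1⟩, by omega, e3⟩)
  · have e1 : q.2 = (m : ℤ) + 1 + b := by by_contra hc; exact h1 (by omega)
    have e3 : b = 1 ∨ c + 2 ≤ b := by
      by_contra hc
      push_neg at hc
      exact h2 (by omega)
    exact Or.inr (Or.inr (Or.inl ⟨⟨h.1, e1⟩, by omega, e3⟩))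
  · have e1 : q.2 = (m : ℤ) + 2 + c := by by_contra hc; exact h1 (by omega)
    exact Or.inr (Or.inr (Or.inr ⟨⟨h.1, e1⟩, by omega⟩))

set_option maxHeartbeats 1000000 in
lemma R1 (m : ℕ) : cnt (m+1) 0 0 0 = cnt m 3 0 0 := by
  have he : (shape (m+1) 0 0 0).erase ((m : ℤ)+1, (m : ℤ)+4) = shape m 3 0 0 := by
    ext r
    simp only [Finset.mem_erase, mem_shape, ne_eq, Prod.ext_iff]
    omega
  rw [cnt, cnt, ← he]
  apply ncard_one
  · rw [mem_shape]; dsimp only; omega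
  · rw [mem_shape]; dsimp only; omega
  · rw [mem_shape]; dsimp only; omega
  · intro q hq h1 h2
    have hch := removable_char hq h1 h2
    rw [Prod.ext_iff]
    omega

set_option maxHeartbeats 1000000 in
lemma R2 (m : ℕ) : cnt m 3 0 0 = cnt m 2 0 0 := by
  have he : (shape m 3 0 0).erase ((m : ℤ)+1, (m : ℤ)+3) = shape m 2 0 0 := by
    ext r
    simp only [Finset.mem_erase, mem_shape, ne_eq, Prod.ext_iff]
    omega
  rw [cnt, cnt, ← he]
  apply ncard_one
  · rw [mem_shape]; dsimp only; omega
  · rw [mem_shape]; dsimp only; omega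
  · rw [mem_shape]; dsimp only; omega
  · intro q hq h1 h2
    have hch := removable_char hq h1 h2
    rw [Prod.ext_iff]
    omega

set_option maxHeartbeats 1000000 in
lemma R3 (m : ℕ) : cnt (m+1) 2 0 0 = cnt (m+1) 1 0 0 + cnt m 3 2 0 := by
  have he1 : (shape (m+1) 2 0 0).erase ((m : ℤ)+2, (m : ℤ)+3) = shape (m+1) 1 0 0 := by
    ext r
    simp only [Finset.mem_erase, mem_shape, ne_eq, Prod.ext_iff]
    omega
  have he2 : (shape (m+1) 2 0 0).erase ((m : ℤ)+1, (m : ℤ)+4) = shape m 3 2 0 := by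
    ext r
    simp only [Finset.mem_erase, mem_shape, ne_eq, Prod.ext_iff]
    omega
  rw [cnt, cnt, cnt, ← he1, ← he2]
  apply ncard_two
  · rw [mem_shape]; dsimp only; omega
  · rw [mem_shape]; dsimp only; omega
  · rw [mem_shape]; dsimp only; omega
  · rw [mem_shape]; dsimp only; omega
  · rw [mem_shape]; dsimp only; omega
  · rw [mem_shape]; dsimp only; omega
  · simp only [ne_eq, Prod.ext_iff]; omega
  · intro r hr h1 h2
    have hch := removable_char hr h1 h2
    simp only [Prod.ext_iff]
    omega

set_option maxHeartbeats 1000000 in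
lemma R4 (m : ℕ) : cnt (m+1) 1 0 0 = cnt (m+1) 0 0 0 + cnt m 3 1 0 := by
  have he1 : (shape (m+1) 1 0 0).erase ((m : ℤ)+2, (m : ℤ)+2) = shape (m+1) 0 0 0 := by
    ext r
    simp only [Finset.mem_erase, mem_shape, ne_eq, Prod.ext_iff]
    omega
  have he2 : (shape (m+1) 1 0 0).erase ((m : ℤ)+1, (m : ℤ)+4) = shape m 3 1 0 := by
    ext r
    simp only [Finset.mem_erase, mem_shape, ne_eq, Prod.ext_iff]
    omega
  rw [cnt, cnt, cnt, ← he1, ← he2]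
  apply ncard_two
  · rw [mem_shape]; dsimp only; omega
  · rw [mem_shape]; dsimp only; omega
  · rw [mem_shape]; dsimp only; omega
  · rw [mem_shape]; dsimp only; omega
  · rw [mem_shape]; dsimp only; omega
  · rw [mem_shape]; dsimp only; omega
  · simp only [ne_eq, Prod.ext_iff]; omega
  · intro r hr h1 h2
    have hch := removable_char hr h1 h2
    simp only [Prod.ext_iff]
    omega

set_option maxHeartbeats 1000000 in
lemma R5 (m : ℕ) : cnt m 3 2 0 = cnt m 3 1 0 := by
  have he : (shape m 3 2 0).erase ((m : ℤ)+2, (m : ℤ)+3) = shape m 3 1 0 := by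
    ext r
    simp only [Finset.mem_erase, mem_shape, ne_eq, Prod.ext_iff]
    omega
  rw [cnt, cnt, ← he]
  apply ncard_one
  · rw [mem_shape]; dsimp only; omega
  · rw [mem_shape]; dsimp only; omega
  · rw [mem_shape]; dsimp only; omega
  · intro q hq h1 h2
    have hch := removable_char hq h1 h2
    rw [Prod.ext_iff]
    omega

set_option maxHeartbeats 1000000 in
lemma R6 (m : ℕ) : cnt m 3 1 0 = cnt m 3 0 0 + cnt m 2 1 0 := by
  have he1 : (shape m 3 1 0).erase ((m : ℤ)+2, (m : ℤ)+2) = shape m 3 0 0 := by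
    ext r
    simp only [Finset.mem_erase, mem_shape, ne_eq, Prod.ext_iff]
    omega
  have he2 : (shape m 3 1 0).erase ((m : ℤ)+1, (m : ℤ)+3) = shape m 2 1 0 := by
    ext r
    simp only [Finset.mem_erase, mem_shape, ne_eq, Prod.ext_iff]
    omega
  rw [cnt, cnt, cnt, ← he1, ← he2]
  apply ncard_two
  · rw [mem_shape]; dsimp only; omega
  · rw [mem_shape]; dsimp only; omega
  · rw [mem_shape]; dsimp only; omega
  · rw [mem_shape]; dsimp only; omega
  · rw [mem_shape]; dsimp only; omega
  · rw [mem_shape]; dsimp only; omega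
  · simp only [ne_eq, Prod.ext_iff]; omega
  · intro r hr h1 h2
    have hch := removable_char hr h1 h2
    simp only [Prod.ext_iff]
    omega

set_option maxHeartbeats 1000000 in
lemma R7 (m : ℕ) : cnt (m+1) 2 1 0 = cnt (m+1) 2 0 0 + cnt m 3 2 1 := by
  have he1 : (shape (m+1) 2 1 0).erase ((m : ℤ)+3, (m : ℤ)+3) = shape (m+1) 2 0 0 := by
    ext r
    simp only [Finset.mem_erase, mem_shape, ne_eq, Prod.ext_iff]
    omega
  have he2 : (shape (m+1) 2 1 0).erase ((m : ℤ)+1, (m : ℤ)+4) = shape m 3 2 1 := by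
    ext r
    simp only [Finset.mem_erase, mem_shape, ne_eq, Prod.ext_iff]
    omega
  rw [cnt, cnt, cnt, ← he1, ← he2]
  apply ncard_two
  · rw [mem_shape]; dsimp only; omega
  · rw [mem_shape]; dsimp only; omega
  · rw [mem_shape]; dsimp only; omega
  · rw [mem_shape]; dsimp only; omega
  · rw [mem_shape]; dsimp only; omega
  · rw [mem_shape]; dsimp only; omega
  · simp only [ne_eq, Prod.ext_iff]; omega
  · intro r hr h1 h2
    have hch := removable_char hr h1 h2
    simp only [Prod.ext_iff]
    omega

set_option maxHeartbeats 1000000 in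
lemma R8 (m : ℕ) : cnt m 3 2 1 = cnt m 3 2 0 := by
  have he : (shape m 3 2 1).erase ((m : ℤ)+3, (m : ℤ)+3) = shape m 3 2 0 := by
    ext r
    simp only [Finset.mem_erase, mem_shape, ne_eq, Prod.ext_iff]
    omega
  rw [cnt, cnt, ← he]
  apply ncard_one
  · rw [mem_shape]; dsimp only; omega
  · rw [mem_shape]; dsimp only; omega
  · rw [mem_shape]; dsimp only; omega
  · intro q hq h1 h2
    have hch := removable_char hq h1 h2
    rw [Prod.ext_iff]
    omega

lemma key (m : ℕ) : cnt (m+3) 0 0 0 + cnt (m+1) 0 0 0 = 6 * cnt (m+2) 0 0 0 := by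
  have h1a : cnt (m+2) 0 0 0 = cnt (m+1) 3 0 0 := R1 (m+1)
  have h1b : cnt (m+3) 0 0 0 = cnt (m+2) 3 0 0 := R1 (m+2)
  have h2a : cnt (m+1) 3 0 0 = cnt (m+1) 2 0 0 := R2 (m+1)
  have h2b : cnt (m+2) 3 0 0 = cnt (m+2) 2 0 0 := R2 (m+2)
  have h3a : cnt (m+1) 2 0 0 = cnt (m+1) 1 0 0 + cnt m 3 2 0 := R3 m
  have h3b : cnt (m+2) 2 0 0 = cnt (m+2) 1 0 0 + cnt (m+1) 3 2 0 := R3 (m+1)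
  have h4a : cnt (m+1) 1 0 0 = cnt (m+1) 0 0 0 + cnt m 3 1 0 := R4 m
  have h4b : cnt (m+2) 1 0 0 = cnt (m+2) 0 0 0 + cnt (m+1) 3 1 0 := R4 (m+1)
  have h5a : cnt m 3 2 0 = cnt m 3 1 0 := R5 m
  have h5b : cnt (m+1) 3 2 0 = cnt (m+1) 3 1 0 := R5 (m+1)
  have h6 : cnt (m+1) 3 1 0 = cnt (m+1) 3 0 0 + cnt (m+1) 2 1 0 := R6 (m+1)
  have h7 : cnt (m+1) 2 1 0 = cnt (m+1) 2 0 0 + cnt m 3 2 1 := R7 m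
  have h8 : cnt m 3 2 1 = cnt m 3 2 0 := R8 m
  omega

lemma mem_Sh1Four {m : ℕ} {p : ℤ × ℤ} :
    p ∈ Sh1Four m ↔ p.1 ≤ p.2 ∧ 1 ≤ p.1 ∧ p.1 ≤ (m : ℤ) + 1 ∧ p.2 < p.1 + 4 := by
  simp only [Sh1Four, Finset.mem_biUnion, Finset.mem_range, Finset.mem_image]
  constructor
  · rintro ⟨i, hi, j, hj, rfl⟩
    dsimp only
    omega
  · rintro ⟨h0, h1, h2, h3⟩
    exact ⟨(p.1 - 1).toNat, by omega, (p.2 - p.1).toNat, by omega,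
      by rw [← Prod.mk.eta (p := p), Prod.mk.injEq]; omega⟩

lemma Sh1Four_eq (m : ℕ) : Sh1Four m = shape (m+1) 0 0 0 := by
  ext r
  rw [mem_Sh1Four, mem_shape]
  push_cast
  omega

lemma T_eq (n : ℕ) (hn : 1 ≤ n) : T n = cnt n 0 0 0 := by
  have h : n - 1 + 1 = n := by omega
  rw [T, Sh1Four_eq, h, cnt]

/-- Hardin–Heinz recurrence: `T(n) = 6·T(n−1) − T(n−2)` for all `n ≥ 3`. -/
theorem T_recurrence (n : ℕ) (hn : 3 ≤ n) :
    (T n : ℤ) = 6 * T (n - 1) - T (n - 2) := by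
  obtain ⟨m, rfl⟩ : ∃ m, n = m + 3 := ⟨n - 3, by omega⟩
  have e1 : T (m + 3) = cnt (m+3) 0 0 0 := T_eq _ (by omega)
  have e2 : T (m + 3 - 1) = cnt (m+2) 0 0 0 := by
    rw [show m + 3 - 1 = m + 2 from rfl]; exact T_eq _ (by omega)
  have e3 : T (m + 3 - 2) = cnt (m+1) 0 0 0 := by
    rw [show m + 3 - 2 = m + 1 from rfl]; exact T_eq _ (by omega)
  have hk := key m
  rw [e1, e2, e3]
  push_cast
  omega
end

section
/- Let N ⊆ ℕ² be a finite connected skew shape admitting at least one standard Young tableau. Then there exists exactly one source tableau of shape N: exactly one standard Young tableau τ of shape N such that whenever (i,j) and (i,j+1) both lie in N, τ(i,j+1) = τ(i,j)+1. -/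
/-- A standard Young tableau of shape `N ⊆ ℕ²` (cells written `(row, column)`). -/
def IsSYTN (N : Finset (ℕ × ℕ)) (τ : ℕ × ℕ → ℕ) : Prop :=
  Set.BijOn τ ↑N (Set.Icc 1 N.card) ∧
  (∀ p : ℕ × ℕ, p ∈ N → (p.1, p.2 + 1) ∈ N → τ p < τ (p.1, p.2 + 1)) ∧
  (∀ p : ℕ × ℕ, p ∈ N → (p.1 + 1, p.2) ∈ N → τ p < τ (p.1 + 1, p.2))

/-- The set of standard Young tableaux of shape `N`, normalized to vanish off `N`. -/
def sytSetN (N : Finset (ℕ × ℕ)) : Set (ℕ × ℕ → ℕ) :=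
  {τ | IsSYTN N τ ∧ ∀ v, v ∉ N → τ v = 0}

/-- `N` is a skew shape `λ/μ`. -/
def IsSkewShape (N : Finset (ℕ × ℕ)) : Prop :=
  ∃ lam mu : ℕ → ℕ, Antitone lam ∧ Antitone mu ∧ (∀ i, mu i ≤ lam i) ∧
    ∀ p : ℕ × ℕ, p ∈ N ↔ mu p.1 < p.2 ∧ p.2 ≤ lam p.1

/-- Two cells are adjacent if they share an edge. -/
def AdjCell (u v : ℕ × ℕ) : Prop :=
  (u.1 = v.1 ∧ (u.2 = v.2 + 1 ∨ v.2 = u.2 + 1)) ∨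
  (u.2 = v.2 ∧ (u.1 = v.1 + 1 ∨ v.1 = u.1 + 1))

/-- `N` is connected. -/
def ConnectedShape (N : Finset (ℕ × ℕ)) : Prop :=
  ∀ u ∈ N, ∀ v ∈ N, Relation.ReflTransGen (fun a b => b ∈ N ∧ AdjCell a b) u v

/-- A source tableau: horizontally adjacent cells carry consecutive entries. -/
def IsSource (N : Finset (ℕ × ℕ)) (τ : ℕ × ℕ → ℕ) : Prop :=
  ∀ p : ℕ × ℕ, p ∈ N → (p.1, p.2 + 1) ∈ N → τ (p.1, p.2 + 1) = τ p + 1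

/-!
Number the cells in reading order (row by row, left to right). This row-reading tableau is
standard, and it is a source tableau because the rows of a skew shape are intervals.
Conversely, the entries of a source tableau along a row form an interval of integers, and distinct
rows give disjoint intervals; a vertical edge between rows `r` and `r + 1`, which connectedness
provides, therefore puts the whole interval of row `r` below that of row `r + 1`. Hence every
source tableau increases in reading order, and a bijection onto `{1, …, |N|}` that increases along
a linear order is the rank function of that order.
-/

open Finset

section Rank

variable {α : Type*} [LinearOrder α]

def rankIn (s : Finset α) (a : α) : ℕ := #{b ∈ s | b ≤ a}

variable {s : Finset α}

lemma rankIn_lt_rankIn {a b : α} (hb : b ∈ s) (hab : a < b) : rankIn s a < rankIn s b := by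
  refine card_lt_card ⟨fun x hx => ?_, fun h => ?_⟩
  · rw [mem_filter] at hx ⊢
    exact ⟨hx.1, hx.2.trans hab.le⟩
  · exact hab.not_ge (mem_filter.1 (h (mem_filter.2 ⟨hb, le_rfl⟩))).2

lemma rankIn_strictMonoOn : StrictMonoOn (rankIn s) s :=
  fun _ _ _ hb hab => rankIn_lt_rankIn hb hab

lemma rankIn_bijOn : Set.BijOn (rankIn s) s (Set.Icc 1 #s) := by
  have hmaps : Set.MapsTo (rankIn s) s (Icc 1 #s) := fun a ha =>
    mem_Icc.2 ⟨card_pos.2 ⟨a, mem_filter.2 ⟨ha, le_rfl⟩⟩, card_filter_le _ _⟩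
  have hinj : Set.InjOn (rankIn s) s := rankIn_strictMonoOn.injOn
  refine ⟨by simpa using hmaps, hinj, ?_⟩
  simpa using surjOn_of_injOn_of_card_le _ hmaps hinj (by simp)

lemma rankIn_of_covBy {a b : α} (hb : b ∈ s) (hab : a ⋖ b) :
    rankIn s b = rankIn s a + 1 := by
  have hle : ∀ x, x ≤ b ↔ x = b ∨ x ≤ a := fun x => by
    rw [le_iff_eq_or_lt, ← Set.mem_Iio, hab.Iio_eq, Set.mem_Iic]
  have hfilter : ({x ∈ s | x ≤ b} : Finset α) = insert b {x ∈ s | x ≤ a} := by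
    ext x
    simp only [mem_filter, mem_insert, hle]
    constructor
    · rintro ⟨hx, rfl | h⟩ <;> simp_all
    · rintro (rfl | ⟨hx, h⟩) <;> simp_all
  rw [rankIn, hfilter, card_insert_of_notMem]
  · rfl
  · exact fun h => hab.lt.not_ge (mem_filter.1 h).2

lemma eq_rankIn_of_bijOn {f : α → ℕ} (hbij : Set.BijOn f s (Set.Icc 1 #s))
    (hf : StrictMonoOn f s) {a : α} (ha : a ∈ s) : f a = rankIn s a := by
  have himage : s.image f = Icc 1 #s := by
    rw [← coe_inj, coe_image, coe_Icc]
    exact hbij.image_eq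
  have hfa : f a ≤ #s := (hbij.mapsTo ha).2
  calc f a = #(Icc 1 (f a)) := by simp
    _ = #{v ∈ Icc 1 #s | v ≤ f a} := by
      congr 1; ext v; simp only [mem_Icc, mem_filter]; omega
    _ = #(image f {b ∈ s | b ≤ a}) := by
      rw [← himage, filter_image]
      congr 2; ext b
      simp only [mem_filter, and_congr_right_iff]
      exact fun hb => hf.le_iff_le hb ha
    _ = rankIn s a := card_image_of_injOn (hbij.injOn.mono (coe_subset.2 (filter_subset _ _)))

end Rank

lemma Set.OrdConnected.lt_of_disjoint {α : Type*} [LinearOrder α] {A B : Set α}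
    (hA : A.OrdConnected) (hB : B.OrdConnected) (hAB : Disjoint A B) {x y a b : α}
    (hx : x ∈ A) (hy : y ∈ B) (hxy : x < y) (ha : a ∈ A) (hb : b ∈ B) : a < b := by
  by_contra! hba
  rcases le_or_gt b x with hbx | hxb
  · exact hAB.ne_of_mem hx (hB.out hb hy ⟨hbx, hxy.le⟩) rfl
  · exact hAB.ne_of_mem (hA.out hx ha ⟨hxb.le, hba⟩) hb rfl

def RowConvex (N : Finset (ℕ × ℕ)) : Prop :=
  ∀ ⦃r c₁ c₂ c : ℕ⦄, (r, c₁) ∈ N → (r, c₂) ∈ N → c₁ ≤ c → c ≤ c₂ → (r, c) ∈ N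

lemma IsSkewShape.rowConvex {N : Finset (ℕ × ℕ)} (h : IsSkewShape N) : RowConvex N := by
  obtain ⟨lam, mu, -, -, -, hmem⟩ := h
  intro r c₁ c₂ c h₁ h₂ hc₁ hc₂
  rw [hmem] at h₁ h₂ ⊢
  exact ⟨h₁.1.trans_le hc₁, hc₂.trans h₂.2⟩

lemma ConnectedShape.exists_vertical_edge {N : Finset (ℕ × ℕ)} (hconn : ConnectedShape N)
    {u v : ℕ × ℕ} (hu : u ∈ N) (hv : v ∈ N) {r : ℕ} (hur : u.1 ≤ r) (hrv : r < v.1) :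
    ∃ c, (r, c) ∈ N ∧ (r + 1, c) ∈ N := by
  induction hconn u hu v hv using Relation.ReflTransGen.head_induction_on with
  | refl => omega
  | @head a w hstep _ ih =>
    obtain ⟨hw, hadj⟩ := hstep
    by_cases hwr : w.1 ≤ r
    · exact ih hw hwr
    · obtain ⟨a₁, a₂⟩ := a
      obtain ⟨w₁, w₂⟩ := w
      simp only [AdjCell] at hadj hur hwr
      obtain rfl : a₁ = r := by omega
      obtain ⟨rfl, rfl⟩ : w₁ = a₁ + 1 ∧ w₂ = a₂ := by omega
      exact ⟨_, hu, hw⟩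

section SourceTableau

variable {N : Finset (ℕ × ℕ)} {τ : ℕ × ℕ → ℕ}

lemma IsSource.apply_add (hrow : RowConvex N) (hsrc : IsSource N τ) {r c k : ℕ}
    (h₁ : (r, c) ∈ N) (h₂ : (r, c + k) ∈ N) : τ (r, c + k) = τ (r, c) + k := by
  induction k with
  | zero => rfl
  | succ k ih =>
    have hk : (r, c + k) ∈ N := hrow h₁ h₂ (by omega) (by omega)
    rw [← add_assoc, hsrc (r, c + k) hk h₂, ih hk, add_assoc]

def rowValues (N : Finset (ℕ × ℕ)) (τ : ℕ × ℕ → ℕ) (r : ℕ) : Set ℕ :=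
  {v | ∃ c, (r, c) ∈ N ∧ τ (r, c) = v}

lemma IsSource.ordConnected_rowValues (hrow : RowConvex N) (hsrc : IsSource N τ) (r : ℕ) :
    (rowValues N τ r).OrdConnected := by
  refine ⟨?_⟩
  rintro _ ⟨c₁, h₁, rfl⟩ _ ⟨c₂, h₂, rfl⟩ v ⟨hv₁, hv₂⟩
  rcases le_total c₁ c₂ with hc | hc
  · obtain ⟨k, rfl⟩ := Nat.exists_eq_add_of_le hc
    have hk := hsrc.apply_add hrow h₁ h₂
    have hmem : (r, c₁ + (v - τ (r, c₁))) ∈ N := hrow h₁ h₂ (by omega) (by omega)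
    exact ⟨_, hmem, by rw [hsrc.apply_add hrow h₁ hmem]; omega⟩
  · obtain ⟨k, rfl⟩ := Nat.exists_eq_add_of_le hc
    have hk := hsrc.apply_add hrow h₂ h₁
    exact ⟨c₂ + k, h₁, by omega⟩

lemma disjoint_rowValues (hinj : Set.InjOn τ N) {r r' : ℕ} (h : r ≠ r') :
    Disjoint (rowValues N τ r) (rowValues N τ r') := by
  rw [Set.disjoint_left]
  rintro _ ⟨c, hc, rfl⟩ ⟨c', hc', he⟩
  exact h (congrArg Prod.fst (hinj hc' hc he)).symm

lemma IsSource.lt_of_mem_row_succ (hrow : RowConvex N) (hconn : ConnectedShape N)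
    (hτ : IsSYTN N τ) (hsrc : IsSource N τ) {r c c' : ℕ} (hp : (r, c) ∈ N)
    (hq : (r + 1, c') ∈ N) : τ (r, c) < τ (r + 1, c') := by
  obtain ⟨j, hj, hj'⟩ := hconn.exists_vertical_edge hp hq le_rfl (lt_add_one r)
  exact (hsrc.ordConnected_rowValues hrow r).lt_of_disjoint
    (hsrc.ordConnected_rowValues hrow (r + 1))
    (disjoint_rowValues hτ.1.injOn (Nat.succ_ne_self r).symm)
    ⟨j, hj, rfl⟩ ⟨j, hj', rfl⟩ (hτ.2.2 (r, j) hj hj') ⟨c, hp, rfl⟩ ⟨c', hq, rfl⟩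

lemma IsSource.lt_of_fst_lt (hrow : RowConvex N) (hconn : ConnectedShape N)
    (hτ : IsSYTN N τ) (hsrc : IsSource N τ) {p q : ℕ × ℕ} (hp : p ∈ N) (hq : q ∈ N)
    (h : p.1 < q.1) : τ p < τ q := by
  obtain ⟨r, c⟩ := p
  obtain ⟨n, c'⟩ := q
  simp only at h
  induction n, h using Nat.le_induction generalizing c' with
  | base => exact hsrc.lt_of_mem_row_succ hrow hconn hτ hp hq
  | succ n hn ih =>
    obtain ⟨j, hj, -⟩ := hconn.exists_vertical_edge hp hq (by simp only at hn ⊢; omega)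
      (lt_add_one n)
    exact (ih j hj).trans (hsrc.lt_of_mem_row_succ hrow hconn hτ hj hq)

lemma IsSource.lt_of_toLex_lt (hrow : RowConvex N) (hconn : ConnectedShape N)
    (hτ : IsSYTN N τ) (hsrc : IsSource N τ) {p q : ℕ × ℕ} (hp : p ∈ N) (hq : q ∈ N)
    (h : toLex p < toLex q) : τ p < τ q := by
  obtain ⟨r, c⟩ := p
  obtain ⟨r', c'⟩ := q
  rcases Prod.Lex.toLex_lt_toLex.1 h with hr | ⟨rfl, hc⟩
  · exact hsrc.lt_of_fst_lt hrow hconn hτ hp hq hr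
  · obtain ⟨k, rfl⟩ := Nat.exists_eq_add_of_le hc.le
    rw [hsrc.apply_add hrow hp hq]
    omega

end SourceTableau

def lexCells (N : Finset (ℕ × ℕ)) : Finset (ℕ ×ₗ ℕ) := N.map toLex.toEmbedding

@[simp]
lemma toLex_mem_lexCells {N : Finset (ℕ × ℕ)} {p : ℕ × ℕ} : toLex p ∈ lexCells N ↔ p ∈ N := by
  simp [lexCells]

lemma coe_lexCells (N : Finset (ℕ × ℕ)) : (lexCells N : Set (ℕ ×ₗ ℕ)) = toLex '' N := by
  simp [lexCells]

lemma card_lexCells (N : Finset (ℕ × ℕ)) : #(lexCells N) = #N := card_map _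

def readingTableau (N : Finset (ℕ × ℕ)) (p : ℕ × ℕ) : ℕ :=
  if p ∈ N then rankIn (lexCells N) (toLex p) else 0

lemma readingTableau_of_mem {N : Finset (ℕ × ℕ)} {p : ℕ × ℕ} (hp : p ∈ N) :
    readingTableau N p = rankIn (lexCells N) (toLex p) := if_pos hp

lemma readingTableau_lt_of_toLex_lt {N : Finset (ℕ × ℕ)} {p q : ℕ × ℕ} (hp : p ∈ N)
    (hq : q ∈ N) (h : toLex p < toLex q) : readingTableau N p < readingTableau N q := by
  rw [readingTableau_of_mem hp, readingTableau_of_mem hq]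
  exact rankIn_lt_rankIn (toLex_mem_lexCells.2 hq) h

lemma readingTableau_mem_sytSetN (N : Finset (ℕ × ℕ)) : readingTableau N ∈ sytSetN N := by
  refine ⟨⟨?_, ?_, ?_⟩, fun p hp => if_neg hp⟩
  · have hbij := rankIn_bijOn (s := lexCells N)
    rw [coe_lexCells, card_lexCells, ← Set.bijOn_comp_iff toLex.injective.injOn] at hbij
    exact hbij.congr fun p hp => (readingTableau_of_mem hp).symm
  · exact fun p hp hp' => readingTableau_lt_of_toLex_lt hp hp'
      (Prod.Lex.toLex_lt_toLex.2 (Or.inr ⟨rfl, lt_add_one _⟩))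
  · exact fun p hp hp' => readingTableau_lt_of_toLex_lt hp hp'
      (Prod.Lex.toLex_lt_toLex.2 (Or.inl (lt_add_one _)))

lemma isSource_readingTableau (N : Finset (ℕ × ℕ)) : IsSource N (readingTableau N) := by
  intro p hp hp'
  rw [readingTableau_of_mem hp, readingTableau_of_mem hp']
  refine rankIn_of_covBy (toLex_mem_lexCells.2 hp') ⟨?_, fun x hpx hxp => ?_⟩
  · exact Prod.Lex.toLex_lt_toLex.2 (Or.inr ⟨rfl, lt_add_one _⟩)
  · rw [← toLex_ofLex x, Prod.Lex.toLex_lt_toLex] at hpx hxp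
    omega

lemma eq_readingTableau_of_isSource {N : Finset (ℕ × ℕ)} {τ : ℕ × ℕ → ℕ}
    (hrow : RowConvex N) (hconn : ConnectedShape N) (hτ : τ ∈ sytSetN N)
    (hsrc : IsSource N τ) : τ = readingTableau N := by
  obtain ⟨hsyt, hzero⟩ := hτ
  have hbij : Set.BijOn (τ ∘ ofLex) (lexCells N) (Set.Icc 1 #(lexCells N)) := by
    rw [coe_lexCells, card_lexCells, ← Set.bijOn_comp_iff toLex.injective.injOn]
    exact hsyt.1
  have hmono : StrictMonoOn (τ ∘ ofLex) (lexCells N) := by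
    rw [coe_lexCells]
    rintro _ ⟨p, hp, rfl⟩ _ ⟨q, hq, rfl⟩ h
    exact hsrc.lt_of_toLex_lt hrow hconn hsyt hp hq h
  funext p
  by_cases hp : p ∈ N
  · rw [readingTableau_of_mem hp]
    exact eq_rankIn_of_bijOn hbij hmono (toLex_mem_lexCells.2 hp)
  · rw [hzero p hp, readingTableau, if_neg hp]

theorem existsUnique_source_general (N : Finset (ℕ × ℕ))
    (hskew : IsSkewShape N) (hconn : ConnectedShape N) :
    ∃! τ : ℕ × ℕ → ℕ, τ ∈ sytSetN N ∧ IsSource N τ :=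
  ⟨readingTableau N, ⟨readingTableau_mem_sytSetN N, isSource_readingTableau N⟩,
    fun _ ⟨hτ, hsrc⟩ => eq_readingTableau_of_isSource hskew.rowConvex hconn hτ hsrc⟩

/-- A connected skew shape admitting a standard Young tableau has exactly one
source tableau. -/
theorem existsUnique_source (N : Finset (ℕ × ℕ))
    (hskew : IsSkewShape N) (hconn : ConnectedShape N)
    (hne : (sytSetN N).Nonempty) :
    ∃! τ : ℕ × ℕ → ℕ, τ ∈ sytSetN N ∧ IsSource N τ :=
  existsUnique_source_general N hskew hconn
end

section
/- Let N ⊆ ℕ² be a finite connected skew shape admitting at least one standard Young tableau. Then there exists exactly one sink tableau of shape N: exactly one standard Young tableau τ of shape N such that whenever (i,j) and (i+1,j) both lie in N, τ(i+1,j) = τ(i,j)+1. -/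
/-- A sink tableau: vertically adjacent cells carry consecutive entries. -/
def IsSink (N : Finset (ℕ × ℕ)) (τ : ℕ × ℕ → ℕ) : Prop :=
  ∀ p : ℕ × ℕ, p ∈ N → (p.1 + 1, p.2) ∈ N → τ (p.1 + 1, p.2) = τ p + 1

/-! ### Auxiliary material -/

/-- Column-reading order: compare columns, then rows. -/
def colLt (u v : ℕ × ℕ) : Prop :=
  u.2 < v.2 ∨ (u.2 = v.2 ∧ u.1 < v.1)

instance : DecidableRel colLt := fun u v => by unfold colLt; infer_instance

lemma colLt_trans {a b c : ℕ × ℕ} (h1 : colLt a b) (h2 : colLt b c) : colLt a c := by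
  unfold colLt at *; omega

lemma colLt_irrefl (a : ℕ × ℕ) : ¬ colLt a a := by unfold colLt; omega

lemma colLt_trichotomy {a b : ℕ × ℕ} (h : a ≠ b) : colLt a b ∨ colLt b a := by
  have h' : a.1 ≠ b.1 ∨ a.2 ≠ b.2 := by
    by_contra hc
    push_neg at hc
    exact h (Prod.ext hc.1 hc.2)
  unfold colLt; omega

/-- Rank of a cell in the column-reading order. -/
def rk (N : Finset (ℕ × ℕ)) (p : ℕ × ℕ) : ℕ :=
  (N.filter (fun v => colLt v p)).card

/-- The candidate sink tableau. -/
def sinkT (N : Finset (ℕ × ℕ)) (p : ℕ × ℕ) : ℕ :=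
  if p ∈ N then rk N p + 1 else 0

lemma rk_lt_rk (N : Finset (ℕ × ℕ)) {u v : ℕ × ℕ} (hu : u ∈ N) (h : colLt u v) :
    rk N u < rk N v := by
  apply Finset.card_lt_card
  constructor
  · intro w hw
    simp only [Finset.mem_filter] at hw ⊢
    exact ⟨hw.1, colLt_trans hw.2 h⟩
  · intro hsub
    have := hsub (Finset.mem_filter.mpr ⟨hu, h⟩)
    simp only [Finset.mem_filter] at this
    exact colLt_irrefl u this.2

lemma rk_lt_card (N : Finset (ℕ × ℕ)) {p : ℕ × ℕ} (hp : p ∈ N) : rk N p < N.card := by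
  apply Finset.card_lt_card
  constructor
  · exact Finset.filter_subset _ _
  · intro hsub
    have := Finset.mem_filter.mp (hsub hp)
    exact colLt_irrefl p this.2

lemma sinkT_lt (N : Finset (ℕ × ℕ)) {u v : ℕ × ℕ} (hu : u ∈ N) (hv : v ∈ N)
    (h : colLt u v) : sinkT N u < sinkT N v := by
  simp only [sinkT, if_pos hu, if_pos hv]
  exact Nat.succ_lt_succ (rk_lt_rk N hu h)

lemma sinkT_injOn (N : Finset (ℕ × ℕ)) : Set.InjOn (sinkT N) ↑N := by
  intro u hu v hv huv
  by_contra hne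
  rcases colLt_trichotomy hne with h | h
  · exact absurd huv (Nat.ne_of_lt (sinkT_lt N hu hv h))
  · exact absurd huv.symm (Nat.ne_of_lt (sinkT_lt N hv hu h))

lemma sinkT_mapsTo (N : Finset (ℕ × ℕ)) : Set.MapsTo (sinkT N) ↑N (Set.Icc 1 N.card) := by
  intro p hp
  have hp' : p ∈ N := hp
  simp only [sinkT, if_pos hp', Set.mem_Icc]
  exact ⟨Nat.succ_le_succ (Nat.zero_le _), rk_lt_card N hp'⟩

lemma sinkT_bijOn (N : Finset (ℕ × ℕ)) : Set.BijOn (sinkT N) ↑N (Set.Icc 1 N.card) := by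
  refine ⟨sinkT_mapsTo N, sinkT_injOn N, ?_⟩
  intro k hk
  have hcard : (Finset.Icc 1 N.card).card ≤ N.card := by
    rw [Nat.card_Icc]; omega
  have hk' : k ∈ Finset.Icc 1 N.card := by
    rw [Finset.mem_Icc]; exact Set.mem_Icc.mp hk
  obtain ⟨a, ha, hak⟩ := Finset.surj_on_of_inj_on_of_card_le (s := N)
    (fun p _ => sinkT N p)
    (fun p hp => by
      have := sinkT_mapsTo N hp
      rw [Finset.mem_Icc]; exact Set.mem_Icc.mp this)
    (fun p q hp hq h => sinkT_injOn N hp hq h) hcard k hk'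
  exact ⟨a, ha, hak.symm⟩

lemma sinkT_sink (N : Finset (ℕ × ℕ)) : IsSink N (sinkT N) := by
  intro p hp hp'
  simp only [sinkT, if_pos hp, if_pos hp']
  have hfil : N.filter (fun v => colLt v (p.1 + 1, p.2)) =
      insert p (N.filter (fun v => colLt v p)) := by
    ext w
    simp only [Finset.mem_insert, Finset.mem_filter]
    constructor
    · rintro ⟨hwN, hw⟩
      unfold colLt at hw
      by_cases hwp : w = p
      · exact Or.inl hwp
      · refine Or.inr ⟨hwN, ?_⟩
        have h' : w.1 ≠ p.1 ∨ w.2 ≠ p.2 := by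
          by_contra hc; push_neg at hc; exact hwp (Prod.ext hc.1 hc.2)
        unfold colLt
        simp only at hw
        omega
    · rintro (rfl | ⟨hwN, hw⟩)
      · exact ⟨hp, Or.inr ⟨rfl, Nat.lt_succ_self _⟩⟩
      · refine ⟨hwN, ?_⟩
        unfold colLt at hw ⊢
        simp only at hw ⊢
        omega
  have hnotmem : p ∉ N.filter (fun v => colLt v p) := by
    simp only [Finset.mem_filter]
    exact fun h => colLt_irrefl p h.2
  unfold rk
  rw [hfil, Finset.card_insert_of_notMem hnotmem]

lemma sinkT_mem (N : Finset (ℕ × ℕ)) : sinkT N ∈ sytSetN N := by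
  refine ⟨⟨sinkT_bijOn N, ?_, ?_⟩, ?_⟩
  · intro p hp hp'
    exact sinkT_lt N hp hp' (Or.inl (Nat.lt_succ_self _))
  · intro p hp hp'
    exact sinkT_lt N hp hp' (Or.inr ⟨rfl, Nat.lt_succ_self _⟩)
  · intro v hv
    simp only [sinkT, if_neg hv]

/-! ### Uniqueness -/

section Unique

variable {N : Finset (ℕ × ℕ)} {τ : ℕ × ℕ → ℕ}

lemma path_mem {u v : ℕ × ℕ} (hu : u ∈ N)
    (h : Relation.ReflTransGen (fun a b => b ∈ N ∧ AdjCell a b) u v) : v ∈ N := by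
  induction h with
  | refl => exact hu
  | tail _ step _ => exact step.1

lemma shared_row {u v : ℕ × ℕ} (hu : u ∈ N)
    (h : Relation.ReflTransGen (fun a b => b ∈ N ∧ AdjCell a b) u v)
    {j : ℕ} (h1 : u.2 ≤ j) (h2 : j + 1 ≤ v.2) :
    ∃ i : ℕ, (i, j) ∈ N ∧ (i, j + 1) ∈ N := by
  induction h with
  | refl => omega
  | @tail b c hpath step ih =>
    by_cases hb : j + 1 ≤ b.2
    · exact ih hb
    · have hbN : b ∈ N := path_mem hu hpath
      have hcN : c ∈ N := step.1
      rcases step.2 with ⟨hrow, hcol⟩ | ⟨hcol, _⟩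
      · have hc2 : c.2 = j + 1 := by omega
        have hb2 : b.2 = j := by omega
        refine ⟨b.1, ?_, ?_⟩
        · have hbe : b = (b.1, j) := Prod.ext rfl hb2
          rwa [hbe] at hbN
        · have hce : c = (b.1, j + 1) := Prod.ext hrow.symm hc2
          rwa [hce] at hcN
      · omega

variable (hskew : IsSkewShape N) (hτ : τ ∈ sytSetN N) (hsink : IsSink N τ)
  (hconn : ConnectedShape N)

include hskew in
lemma contig {i₁ i₂ i j : ℕ} (h1 : (i₁, j) ∈ N) (h2 : (i₂, j) ∈ N)
    (hl : i₁ ≤ i) (hr : i ≤ i₂) : (i, j) ∈ N := by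
  obtain ⟨lam, mu, hlam, hmu, _, hmem⟩ := hskew
  rw [hmem] at h1 h2 ⊢
  simp only at h1 h2 ⊢
  exact ⟨lt_of_le_of_lt (hmu hl) h1.1, le_trans h2.2 (hlam hr)⟩

include hskew hsink in
lemma col_run {i j : ℕ} (d : ℕ) (h1 : (i, j) ∈ N) (h2 : (i + d, j) ∈ N) :
    τ (i + d, j) = τ (i, j) + d := by
  induction d with
  | zero => rfl
  | succ d ih =>
    have hmid : (i + d, j) ∈ N := contig hskew h1 h2 (by omega) (by omega)
    have hstep := hsink (i + d, j) hmid (by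
      have : (i + d + 1, j) = (i + (d + 1), j) := by ring_nf
      rw [this]; exact h2)
    simp only at hstep
    have : (i + (d + 1), j) = (i + d + 1, j) := by ring_nf
    rw [this, hstep, ih hmid]
    omega

include hskew hτ hsink hconn in
lemma adj_col_lt {c : ℕ} {u v : ℕ × ℕ} (hu : u ∈ N) (hv : v ∈ N)
    (huc : u.2 = c) (hvc : v.2 = c + 1) : τ u < τ v := by
  -- shared row
  obtain ⟨i, hA, hB⟩ := shared_row hu (hconn u hu v hv) (le_of_eq huc) (by omega)
  -- bottom of column c
  obtain ⟨pm, hpmS, hpm⟩ := Finset.exists_max_image (N.filter (fun p => p.2 = c))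
    Prod.fst ⟨(i, c), Finset.mem_filter.mpr ⟨hA, rfl⟩⟩
  obtain ⟨pt, hptS, hpt⟩ := Finset.exists_min_image (N.filter (fun p => p.2 = c + 1))
    Prod.fst ⟨(i, c + 1), Finset.mem_filter.mpr ⟨hB, rfl⟩⟩
  rw [Finset.mem_filter] at hpmS hptS
  obtain ⟨hpmN, hpm2⟩ := hpmS
  obtain ⟨hptN, hpt2⟩ := hptS
  set m := pm.1 with hm
  set t := pt.1 with ht
  have hpme : pm = (m, c) := Prod.ext rfl hpm2
  have hpte : pt = (t, c + 1) := Prod.ext rfl hpt2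
  have him : i ≤ m := hpm (i, c) (Finset.mem_filter.mpr ⟨hA, rfl⟩)
  have hti : t ≤ i := hpt (i, c + 1) (Finset.mem_filter.mpr ⟨hB, rfl⟩)
  set x := τ (i, c) with hx
  set y := τ (i, c + 1) with hy
  have hxy : x < y := hτ.1.2.1 (i, c) hA hB
  -- column runs
  have hrun1 : τ (m, c) = x + (m - i) := by
    have := col_run hskew hsink (m - i) hA (by
      have : (i + (m - i), c) = (m, c) := by
        congr 1; omega
      rw [this, ← hpme]; exact hpmN)
    have he : (i + (m - i), c) = (m, c) := by congr 1; omega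
    rwa [he] at this
  have hrun2 : y = τ (t, c + 1) + (i - t) := by
    have := col_run hskew hsink (i - t) (by rw [← hpte]; exact hptN) (by
      have : (t + (i - t), c + 1) = (i, c + 1) := by congr 1; omega
      rw [this]; exact hB)
    have he : (t + (i - t), c + 1) = (i, c + 1) := by congr 1; omega
    rwa [he] at this
  -- key: bottom of column c is below top of column c+1
  have hkey : τ (m, c) < τ (t, c + 1) := by
    by_contra hcon
    push_neg at hcon
    set v' := max x (τ (t, c + 1)) with hv'
    have hxv' : x ≤ v' := le_max_left _ _
    have htv' : τ (t, c + 1) ≤ v' := le_max_right _ _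
    have hd : v' - x ≤ m - i := by omega
    have hpmem : (i + (v' - x), c) ∈ N :=
      contig hskew hA (by rw [← hpme]; exact hpmN) (by omega) (by omega)
    have hτp : τ (i + (v' - x), c) = v' := by
      have := col_run hskew hsink (v' - x) hA hpmem
      rw [this]; omega
    have hv'y : v' ≤ y := by omega
    have he2 : y - v' ≤ i - t := by omega
    have hqmem : (i - (y - v'), c + 1) ∈ N :=
      contig hskew (by rw [← hpte]; exact hptN) hB (by omega) (by omega)
    have hτq : τ (i - (y - v'), c + 1) = v' := by
      have := col_run hskew hsink ((i - (y - v')) - t) (by rw [← hpte]; exact hptN)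
        (by
          have he : (t + ((i - (y - v')) - t), c + 1) = (i - (y - v'), c + 1) := by
            congr 1; omega
          rw [he]; exact hqmem)
      have he : (t + ((i - (y - v')) - t), c + 1) = (i - (y - v'), c + 1) := by
        congr 1; omega
      rw [he] at this
      rw [this]; omega
    have hne' : (i + (v' - x), c) ≠ (i - (y - v'), c + 1) := by
      intro hcc
      have := congrArg Prod.snd hcc
      simp only at this
      omega
    exact hne' (hτ.1.1.2.1 hpmem hqmem (by rw [hτp, hτq]))
  -- conclude
  have hum : τ u ≤ τ (m, c) := by
    have hue : u = (u.1, c) := Prod.ext rfl huc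
    have h1 : (u.1, c) ∈ N := by rw [← hue]; exact hu
    have hum' : u.1 ≤ m := hpm u (Finset.mem_filter.mpr ⟨hu, huc⟩)
    have := col_run hskew hsink (m - u.1) h1 (by
      have : (u.1 + (m - u.1), c) = (m, c) := by congr 1; omega
      rw [this, ← hpme]; exact hpmN)
    have he : (u.1 + (m - u.1), c) = (m, c) := by congr 1; omega
    rw [he] at this
    rw [hue, this]; omega
  have htv : τ (t, c + 1) ≤ τ v := by
    have hve : v = (v.1, c + 1) := Prod.ext rfl hvc
    have h1 : (v.1, c + 1) ∈ N := by rw [← hve]; exact hv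
    have htv' : t ≤ v.1 := hpt v (Finset.mem_filter.mpr ⟨hv, hvc⟩)
    have := col_run hskew hsink (v.1 - t) (by rw [← hpte]; exact hptN) (by
      have : (t + (v.1 - t), c + 1) = (v.1, c + 1) := by congr 1; omega
      rw [this]; exact h1)
    have he : (t + (v.1 - t), c + 1) = (v.1, c + 1) := by congr 1; omega
    rw [he] at this
    rw [hve, this]; omega
  omega

include hskew hτ hsink hconn in
lemma cross_lt : ∀ (k : ℕ) {u v : ℕ × ℕ}, u ∈ N → v ∈ N → v.2 = u.2 + k + 1 →
    τ u < τ v := by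
  intro k
  induction k with
  | zero =>
    intro u v hu hv h
    exact adj_col_lt hskew hτ hsink hconn hu hv rfl (by omega)
  | succ k ih =>
    intro u v hu hv h
    obtain ⟨i, hA, hB⟩ := shared_row hu (hconn u hu v hv) (le_refl u.2) (by omega)
    have h1 : τ u < τ (i, u.2 + 1) :=
      adj_col_lt hskew hτ hsink hconn hu hB rfl rfl
    have h2 : τ (i, u.2 + 1) < τ v := ih hB hv (by simp only; omega)
    omega

include hskew hτ hsink hconn in
lemma mono_lt {u v : ℕ × ℕ} (hu : u ∈ N) (hv : v ∈ N) (h : colLt u v) :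
    τ u < τ v := by
  rcases h with h | ⟨h2, h1⟩
  · exact cross_lt hskew hτ hsink hconn (v.2 - u.2 - 1) hu hv (by omega)
  · have hue : u = (u.1, u.2) := rfl
    have hve : v = (u.1 + (v.1 - u.1), u.2) := by
      apply Prod.ext <;> simp only <;> omega
    have := col_run hskew hsink (v.1 - u.1) (by rw [← hue]; exact hu)
      (by rw [← hve]; exact hv)
    rw [← hue, ← hve] at this
    omega

include hskew hτ hsink hconn in
lemma eq_sinkT : τ = sinkT N := by
  funext p
  by_cases hp : p ∈ N
  · have h1p : 1 ≤ τ p ∧ τ p ≤ N.card := Set.mem_Icc.mp (hτ.1.1.1 hp)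
    have hcard : (N.filter (fun v => colLt v p)).card = (Finset.Ico 1 (τ p)).card := by
      apply Finset.card_bij (fun v _ => τ v)
      · intro a ha
        rw [Finset.mem_filter] at ha
        have h1 : 1 ≤ τ a ∧ τ a ≤ N.card := Set.mem_Icc.mp (hτ.1.1.1 ha.1)
        rw [Finset.mem_Ico]
        exact ⟨h1.1, mono_lt hskew hτ hsink hconn ha.1 hp ha.2⟩
      · intro a ha b hb hab
        rw [Finset.mem_filter] at ha hb
        exact hτ.1.1.2.1 ha.1 hb.1 hab
      · intro k hk
        rw [Finset.mem_Ico] at hk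
        have hk' : k ∈ Set.Icc 1 N.card := Set.mem_Icc.mpr ⟨hk.1, by omega⟩
        obtain ⟨a, haN, hak⟩ := hτ.1.1.2.2 hk'
        have haN' : a ∈ N := haN
        refine ⟨a, Finset.mem_filter.mpr ⟨haN', ?_⟩, hak⟩
        have hne : a ≠ p := by
          intro hc; rw [hc] at hak; omega
        rcases colLt_trichotomy hne with h | h
        · exact h
        · exfalso
          have := mono_lt hskew hτ hsink hconn hp haN' h
          omega
    show τ p = sinkT N p
    unfold sinkT rk
    rw [if_pos hp, hcard, Nat.card_Ico]
    omega
  · rw [hτ.2 p hp]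
    show (0 : ℕ) = sinkT N p
    unfold sinkT
    rw [if_neg hp]

end Unique

/-- A connected skew shape admitting a standard Young tableau has exactly one
sink tableau. -/
theorem existsUnique_sink (N : Finset (ℕ × ℕ))
    (hskew : IsSkewShape N) (hconn : ConnectedShape N)
    (hne : (sytSetN N).Nonempty) :
    ∃! τ : ℕ × ℕ → ℕ, τ ∈ sytSetN N ∧ IsSink N τ := by
  refine ⟨sinkT N, ⟨sinkT_mem N, sinkT_sink N⟩, ?_⟩
  rintro τ ⟨hτ, hsink⟩
  exact eq_sinkT hskew hτ hsink hconn
end
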